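/- Let p > 3 be prime. The polynomial (Y^{p-1} - 1)·(Y^2·(Y^{p-1} - 1) + 4) ∈ F_p[Y] has no multiple roots in the algebraic closure of F_p. -/

import Mathlib

/-!
Over 𝔽_p the polynomial `X ^ (p - 1) - 1` is separable since `p ∤ p - 1`, and it is coprime to
`g = X ^ 2 * (X ^ (p - 1) - 1) + 4` because `g` is congruent to the unit `4` modulo it.
In characteristic `p` we have `g = X ^ (p + 1) - X ^ 2 + 4` and `g' = X ^ p - 2 X`. A common root `a`
satisfies `a ^ 2 = -4` (from `g - X g'`), and applying Frobenius gives `-4 = (a ^ 2) ^ p = (2 a) ^ 2 = -16`,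
impossible when `p > 3`. So the product is separable over 𝔽_p, hence squarefree over any extension.
-/

open Polynomial

theorem ofNat_twelve_ne_zero_of_three_lt (K : Type*) [Ring K] (p : ℕ) [Fact p.Prime] [CharP K p]
    (hp : 3 < p) : (12 : K) ≠ 0 := by
  have hpr : p.Prime := Fact.out
  rw [← Nat.cast_ofNat, Ne, CharP.cast_eq_zero_iff K p]
  intro h
  rcases (Nat.Prime.dvd_mul hpr).mp (show p ∣ 2 ^ 2 * 3 from h) with h2 | h3
  · exact absurd (Nat.le_of_dvd two_pos (hpr.dvd_of_dvd_pow h2)) (by omega)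
  · exact absurd (Nat.le_of_dvd three_pos h3) (by omega)

theorem derivative_X_pow_succ_sub_X_sq_add_four (K : Type*) [CommRing K] (p : ℕ) [CharP K p] :
    derivative (X ^ (p + 1) - X ^ 2 + 4 : K[X]) = X ^ p - 2 * X := by
  simp [one_add_one_eq_two, C_ofNat]

theorem not_common_root_X_pow_succ_sub_X_sq_add_four {L : Type*} [Field L] (p : ℕ) [Fact p.Prime]
    [CharP L p] (hp : 3 < p) (a : L) (hg : a ^ (p + 1) - a ^ 2 + 4 = 0) (hg' : a ^ p - 2 * a = 0) :
    False := by
  have ha : a ^ 2 = -4 := by linear_combination hg - a * hg'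
  have hfrob : (a ^ 2) ^ p = -4 := by
    rw [ha, ← frobenius_def, ← Int.cast_ofNat, ← Int.cast_neg, map_intCast]
  have h12 : (12 : L) = 0 := by
    linear_combination 4 * ha + (a ^ p + 2 * a) * hg' - hfrob
  exact ofNat_twelve_ne_zero_of_three_lt L p hp h12

theorem separable_X_pow_succ_sub_X_sq_add_four (K : Type*) [Field K] (p : ℕ) [Fact p.Prime]
    [CharP K p] (hp : 3 < p) : (X ^ (p + 1) - X ^ 2 + 4 : K[X]).Separable := by
  rw [separable_def, derivative_X_pow_succ_sub_X_sq_add_four,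
    isCoprime_iff_aeval_ne_zero_of_isAlgClosed (k := K) (AlgebraicClosure K)]
  intro a
  by_contra! h
  simp only [map_add, map_sub, map_pow, map_mul, aeval_X, map_ofNat] at h
  exact not_common_root_X_pow_succ_sub_X_sq_add_four p hp a h.1 h.2

theorem isCoprime_mul_add_of_isUnit {R : Type*} [CommRing R] {u : R} (f g : R) (hu : IsUnit u) :
    IsCoprime f (g * f + u) :=
  (isCoprime_one_right.of_isCoprime_of_dvd_right hu.dvd).mul_add_right_right g

theorem stmt_4 (p : ℕ) [Fact p.Prime] (hp : 3 < p) :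
    Squarefree ((((X ^ (p - 1) - 1) * (X ^ 2 * (X ^ (p - 1) - 1) + 4)) : (ZMod p)[X]).map
      (algebraMap (ZMod p) (AlgebraicClosure (ZMod p)))) := by
  have hsep₁ : (X ^ (p - 1) - 1 : (ZMod p)[X]).Separable := by
    simpa using separable_X_pow_sub_C' p (p - 1) (1 : ZMod p)
      (Nat.not_dvd_of_pos_of_lt (by omega) (by omega)) one_ne_zero
  have hsep₂ : (X ^ 2 * (X ^ (p - 1) - 1) + 4 : (ZMod p)[X]).Separable := by
    convert separable_X_pow_succ_sub_X_sq_add_four (ZMod p) p hp using 2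
    rw [mul_sub, mul_one, ← pow_add, show 2 + (p - 1) = p + 1 by omega]
  have hfour : IsUnit (4 : (ZMod p)[X]) := by
    have h12 : (4 * 3 : ZMod p) ≠ 0 := by
      norm_num [ofNat_twelve_ne_zero_of_three_lt (ZMod p) p hp]
    rw [← C_ofNat]
    exact isUnit_C.mpr (left_ne_zero_of_mul h12).isUnit
  exact (hsep₁.mul hsep₂ (isCoprime_mul_add_of_isUnit _ _ hfour)).map.squarefree
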